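/- Let (V^{•,•}, ∂, ∂̄) be a double complex of complex vector spaces satisfying the (∂∂̄)-property. Fix an integer p ≥ 1, let α be a total-degree-2p element with components α^{l,2p−l}, let Z ∈ V^{p,p}, and let β' be a total-degree-(2p−1) element with dβ' = α − Z (Z regarded as a pure-type element of total degree 2p). Suppose 1 ≤ l ≤ p−1 and that elements β^{j,2p−1−j} ∈ V^{j,2p−1−j} for j = 0, …, l−1 satisfy ∂̄β^{0,2p−1} = α^{0,2p} and α^{j,2p−j} − ∂β^{j−1,2p−j} = ∂̄β^{j,2p−1−j} for j = 1, …, l−1. Then α^{l,2p−l} − ∂β^{l−1,2p−l} lies in the image of ∂̄ : V^{l,2p−l−1} → V^{l,2p−l}, so that the next equation α^{l,2p−l} − ∂β^{l−1,2p−l} = ∂̄β^{l,2p−1−l} admits a solution β^{l,2p−1−l} ∈ V^{l,2p−1−l}. -/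

import Mathlib

/-!
Abstract framework: a double complex of complex vector spaces `V p q` (`p q : ℤ`),
with `V p q = 0` for `p < 0` or `q < 0`, differentials
`∂ = D : V p q → V (p+1) q`, `∂̄ = Db : V p q → V p (q+1)` satisfying
`∂∂ = 0`, `∂̄∂̄ = 0`, `∂∂̄ + ∂̄∂ = 0`.
-/

/-- Transport an element of a doubly-indexed family of vector spaces along
equalities of the indices. -/
def DCcast (V : ℤ → ℤ → Type) {p q : ℤ} (p' q' : ℤ) (hp : p = p') (hq : q = q')
    (x : V p q) : V p' q' :=
  cast (congrArg₂ V hp hq) x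

/-- The total differential of a total-degree-`k` element, as a
total-degree-`k'` element (`k' = k + 1`):
`(dx)^{l, k+1-l} = ∂ x^{l-1, k+1-l} + ∂̄ x^{l, k-l}`. -/
def DCd (V : ℤ → ℤ → Type) [∀ p q, AddCommGroup (V p q)] [∀ p q, Module ℂ (V p q)]
    (D : ∀ p q : ℤ, V p q →ₗ[ℂ] V (p + 1) q) (Db : ∀ p q : ℤ, V p q →ₗ[ℂ] V p (q + 1))
    (k k' : ℤ) (hk : k + 1 = k') (x : ∀ l : ℤ, V l (k - l)) : ∀ l : ℤ, V l (k' - l) :=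
  fun l =>
    DCcast V l (k' - l) (by omega) (by omega) (D (l - 1) (k - (l - 1)) (x (l - 1))) +
    DCcast V l (k' - l) (by omega) (by omega) (Db l (k - l) (x l))

/-- A pure-type element of `V p q`, viewed as a total-degree-`k` element
(`k = p + q`) whose other components vanish. -/
def DCpure (V : ℤ → ℤ → Type) [∀ p q, AddCommGroup (V p q)]
    (p q k : ℤ) (hk : p + q = k) (z : V p q) : ∀ l : ℤ, V l (k - l) :=
  fun l => if h : l = p then DCcast V l (k - l) (by omega) (by omega) z else 0

/-- A total-degree-`k` element is real (w.r.t. a real structure `c`) if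
`c (x^{l, k-l}) = x^{k-l, l}` for all `l`. -/
def DCreal (V : ℤ → ℤ → Type) (c : ∀ p q : ℤ, V p q → V q p) (k : ℤ)
    (x : ∀ l : ℤ, V l (k - l)) : Prop :=
  ∀ l : ℤ, c l (k - l) (x l) = DCcast V (k - l) l (by omega) (by omega) (x (k - l))

/-!
Put `u = (β' - B)^{l-1}`. Comparing `dβ' = α` in degree `l - 1 ≠ p` with the equation solved by
`B^{l-1}` gives `∂̄u = ∂(B - β')^{l-2}`. Hence `∂u` is `∂`-closed, `∂̄`-closed
(`∂̄∂u = -∂∂̄u = 0`) and `∂`-exact, so the `∂∂̄`-property gives `∂u = ∂̄z₀`, and then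
`α^l - ∂B^{l-1} = ∂u + ∂̄β'^l = ∂̄(z₀ + β'^l)` because `dβ' = α` in degree `l ≠ p` as well.
For `l = 1` the equation in degree `0` is the one for `B^0`, since `B^{-1} = 0`.
-/

section CastLemmas

variable (V : ℤ → ℤ → Type)

theorem DCcast_self {p q : ℤ} (hp : p = p) (hq : q = q) (x : V p q) :
    DCcast V p q hp hq x = x :=
  rfl

theorem DCcast_DCcast {p q p' q' p'' q'' : ℤ}
    (h1 : p = p') (h2 : q = q') (h3 : p' = p'') (h4 : q' = q'') (x : V p q) :
    DCcast V p'' q'' h3 h4 (DCcast V p' q' h1 h2 x) =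
      DCcast V p'' q'' (h1.trans h3) (h2.trans h4) x := by
  subst h1 h2 h3 h4; rfl

theorem eq_DCcast_of_DCcast_eq_DCcast {p q p' q' P Q : ℤ}
    (h1 : p = P) (h2 : q = Q) (h3 : p' = P) (h4 : q' = Q) (x : V p q) (y : V p' q')
    (h : DCcast V P Q h1 h2 x = DCcast V P Q h3 h4 y) :
    x = DCcast V p q (h3.trans h1.symm) (h4.trans h2.symm) y := by
  subst h1 h2 h3 h4; exact h

variable [∀ p q, AddCommGroup (V p q)]

theorem DCcast_zero {p q p' q' : ℤ} (hp : p = p') (hq : q = q') :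
    DCcast V p' q' hp hq (0 : V p q) = 0 := by
  subst hp hq; rfl

theorem DCcast_add {p q p' q' : ℤ} (hp : p = p') (hq : q = q') (x y : V p q) :
    DCcast V p' q' hp hq (x + y) = DCcast V p' q' hp hq x + DCcast V p' q' hp hq y := by
  subst hp hq; rfl

theorem DCcast_sub {p q p' q' : ℤ} (hp : p = p') (hq : q = q') (x y : V p q) :
    DCcast V p' q' hp hq (x - y) = DCcast V p' q' hp hq x - DCcast V p' q' hp hq y := by
  subst hp hq; rfl

theorem DCpure_apply_of_ne {p q k : ℤ} (hk : p + q = k) (z : V p q) {l : ℤ} (hl : l ≠ p) :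
    DCpure V p q k hk z l = 0 :=
  dif_neg hl

variable [∀ p q, Module ℂ (V p q)]

theorem D_DCcast (D : ∀ p q : ℤ, V p q →ₗ[ℂ] V (p + 1) q)
    {p q p' q' : ℤ} (hp : p = p') (hq : q = q') (x : V p q) :
    D p' q' (DCcast V p' q' hp hq x) = DCcast V (p' + 1) q' (by rw [hp]) hq (D p q x) := by
  subst hp hq; rfl

theorem Db_DCcast (Db : ∀ p q : ℤ, V p q →ₗ[ℂ] V p (q + 1))
    {p q p' q' : ℤ} (hp : p = p') (hq : q = q') (x : V p q) :
    Db p' q' (DCcast V p' q' hp hq x) = DCcast V p' (q' + 1) hp (by rw [hq]) (Db p q x) := by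
  subst hp hq; rfl

end CastLemmas

section DoubleComplex

variable {V : ℤ → ℤ → Type} [∀ p q, AddCommGroup (V p q)] [∀ p q, Module ℂ (V p q)]
  (D : ∀ p q : ℤ, V p q →ₗ[ℂ] V (p + 1) q) (Db : ∀ p q : ℤ, V p q →ₗ[ℂ] V p (q + 1))

theorem DCd_apply_eq {k k' : ℤ} (hk : k + 1 = k') (x : ∀ l : ℤ, V l (k - l)) {i j : ℤ}
    (hij : i + 1 = j) :
    DCd V D Db k k' hk x j =
      DCcast V j (k' - j) hij (by omega) (D i (k - i) (x i)) +
        DCcast V j (k' - j) rfl (by omega) (Db j (k - j) (x j)) := by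
  obtain rfl : i = j - 1 := by omega
  rfl

theorem exists_Db_eq_D_of_Db_eq_D
    (hDD : ∀ (p q : ℤ) (x : V p q), D (p + 1) q (D p q x) = 0)
    (hanti : ∀ (p q : ℤ) (x : V p q), D p (q + 1) (Db p q x) + Db (p + 1) q (D p q x) = 0)
    (hddbar : ∀ (p q : ℤ) (x : V (p + 1) (q + 1)), D (p + 1) (q + 1) x = 0 →
      Db (p + 1) (q + 1) x = 0 → (∃ y, D p (q + 1) y = x) → ∃ z, Db (p + 1) q z = x)
    {a b a' b' c d : ℤ} (ha : a' + 1 = a) (hb : b' = b + 1) (hc : a + 1 = c) (hd : b = d + 1)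
    (u : V a b) (w : V a' b') (h : Db a b u = DCcast V a (b + 1) ha hb (D a' b' w)) :
    ∃ z : V c d, Db c d z = DCcast V c (d + 1) hc hd (D a b u) := by
  subst ha hb hc hd
  have hclosed : Db (a' + 1 + 1) (d + 1) (D (a' + 1) (d + 1) u) = 0 := by
    have := hanti _ _ u
    rwa [h, DCcast_self, hDD, zero_add] at this
  exact hddbar _ _ _ (hDD _ _ u) hclosed ⟨u, rfl⟩

theorem exists_Db_eq_sub_D_of_DCd_eq
    (hDD : ∀ (p q : ℤ) (x : V p q), D (p + 1) q (D p q x) = 0)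
    (hanti : ∀ (p q : ℤ) (x : V p q), D p (q + 1) (Db p q x) + Db (p + 1) q (D p q x) = 0)
    (hddbar : ∀ (p q : ℤ) (x : V (p + 1) (q + 1)), D (p + 1) (q + 1) x = 0 →
      Db (p + 1) (q + 1) x = 0 → (∃ y, D p (q + 1) y = x) → ∃ z, Db (p + 1) q z = x)
    {k k' : ℤ} (hk : k + 1 = k') (α : ∀ l : ℤ, V l (k' - l)) (β B : ∀ l : ℤ, V l (k - l))
    {i j l : ℤ} (hij : i + 1 = j) (hjl : j + 1 = l)
    (hβj : DCd V D Db k k' hk β j = α j) (hβl : DCd V D Db k k' hk β l = α l)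
    (hBj : α j - DCcast V j (k' - j) hij (by omega) (D i (k - i) (B i)) =
      DCcast V j (k' - j) rfl (by omega) (Db j (k - j) (B j))) :
    ∃ z : V l (k - l),
      α l - DCcast V l (k' - l) hjl (by omega) (D j (k - j) (B j)) =
        DCcast V l (k' - l) rfl (by omega) (Db l (k - l) z) := by
  rw [DCd_apply_eq D Db hk β hij] at hβj
  rw [DCd_apply_eq D Db hk β hjl] at hβl
  have hDb_cast : DCcast V j (k' - j) rfl (by omega) (Db j (k - j) (β j - B j)) =
      DCcast V j (k' - j) hij (by omega) (D i (k - i) (B i - β i)) := by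
    rw [map_sub, map_sub, DCcast_sub, DCcast_sub, ← hBj, ← hβj]
    abel
  obtain ⟨z₀, hz₀⟩ := exists_Db_eq_D_of_Db_eq_D D Db hDD hanti hddbar hij (by omega) hjl
    (by omega : k - j = k - l + 1) _ _ (eq_DCcast_of_DCcast_eq_DCcast V _ _ _ _ _ _ hDb_cast)
  refine ⟨z₀ + β l, ?_⟩
  rw [map_add, DCcast_add, hz₀, DCcast_DCcast, ← hβl, map_sub, DCcast_sub]
  abel

end DoubleComplex

/-- In a double complex with the `∂∂̄`-property, let `α` be a
total-degree-`2p` element, `Z ∈ V^{p,p}`, and `β'` a total-degree-`(2p-1)` element with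
`dβ' = α - Z`. If `1 ≤ l ≤ p-1` and `β^{j, 2p-1-j}` (`j = 0, …, l-1`) satisfy
`∂̄β^{0,2p-1} = α^{0,2p}` and `α^{j,2p-j} - ∂β^{j-1,2p-j} = ∂̄β^{j,2p-1-j}` for
`j = 1, …, l-1`, then `α^{l,2p-l} - ∂β^{l-1,2p-l}` lies in the image of
`∂̄ : V^{l,2p-l-1} → V^{l,2p-l}`. -/
theorem statement1
    (V : ℤ → ℤ → Type) [∀ p q, AddCommGroup (V p q)] [∀ p q, Module ℂ (V p q)]
    (D : ∀ p q : ℤ, V p q →ₗ[ℂ] V (p + 1) q)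
    (Db : ∀ p q : ℤ, V p q →ₗ[ℂ] V p (q + 1))
    (hzero : ∀ p q : ℤ, (p < 0 ∨ q < 0) → ∀ x : V p q, x = 0)
    (hDD : ∀ (p q : ℤ) (x : V p q), D (p + 1) q (D p q x) = 0)
    (hanti : ∀ (p q : ℤ) (x : V p q), D p (q + 1) (Db p q x) + Db (p + 1) q (D p q x) = 0)
    -- the `∂∂̄`-property
    (hlem : ∀ (p q : ℤ) (x : V p q), D p q x = 0 → Db p q x = 0 →
      (∃ y : V (p - 1) q, DCcast V p q (by omega) rfl (D (p - 1) q y) = x) →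
      (∃ z : V p (q - 1), DCcast V p q rfl (by omega) (Db p (q - 1) z) = x))
    -- the data
    (p : ℤ)
    (α : ∀ l : ℤ, V l (2 * p - l))
    (Z : V p p)
    (β' : ∀ l : ℤ, V l (2 * p - 1 - l))
    -- `dβ' = α - Z` (with `Z` regarded as a pure-type element of total degree `2p`)
    (hβ' : ∀ l : ℤ, DCd V D Db (2 * p - 1) (2 * p) (by omega) β' l =
      α l - DCpure V p p (2 * p) (by omega) Z l)
    (l : ℤ) (hl1 : 1 ≤ l) (hl2 : l ≤ p - 1)
    (B : ∀ j : ℤ, V j (2 * p - 1 - j))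
    -- `∂̄β^{0,2p-1} = α^{0,2p}`
    (hB0 : DCcast V 0 (2 * p - 0) rfl (by omega) (Db 0 (2 * p - 1 - 0) (B 0)) = α 0)
    -- `α^{j,2p-j} - ∂β^{j-1,2p-j} = ∂̄β^{j,2p-1-j}` for `j = 1, …, l-1`
    (hBj : ∀ j : ℤ, 1 ≤ j → j ≤ l - 1 →
      α j - DCcast V j (2 * p - j) (by omega) (by omega)
          (D (j - 1) (2 * p - 1 - (j - 1)) (B (j - 1))) =
        DCcast V j (2 * p - j) rfl (by omega) (Db j (2 * p - 1 - j) (B j))) :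
    -- then `α^{l,2p-l} - ∂β^{l-1,2p-l} ∈ im (∂̄ : V^{l,2p-l-1} → V^{l,2p-l})`
    ∃ z : V l (2 * p - 1 - l),
      α l - DCcast V l (2 * p - l) (by omega) (by omega)
          (D (l - 1) (2 * p - 1 - (l - 1)) (B (l - 1))) =
        DCcast V l (2 * p - l) rfl (by omega) (Db l (2 * p - 1 - l) z) := by
  -- the `∂∂̄`-property with shifted indices, so that it needs no casts
  have hddbar : ∀ (p q : ℤ) (x : V (p + 1) (q + 1)), D (p + 1) (q + 1) x = 0 →
      Db (p + 1) (q + 1) x = 0 → (∃ y, D p (q + 1) y = x) → ∃ z, Db (p + 1) q z = x := by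
    rintro p q x hDx hDbx ⟨y, rfl⟩
    obtain ⟨z, hz⟩ := hlem _ _ _ hDx hDbx
      ⟨DCcast V _ _ (by omega) rfl y, by rw [D_DCcast, DCcast_DCcast, DCcast_self]⟩
    exact ⟨DCcast V _ q rfl (by omega) z, by rw [Db_DCcast]; exact hz⟩
  have hdβ' : ∀ j, j ≠ p → DCd V D Db (2 * p - 1) (2 * p) (by omega) β' j = α j := fun j hj => by
    rw [hβ', DCpure_apply_of_ne V _ Z hj, sub_zero]
  have hB : ∀ j, 0 ≤ j → j ≤ l - 1 →
      α j - DCcast V j (2 * p - j) (by omega) (by omega)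
          (D (j - 1) (2 * p - 1 - (j - 1)) (B (j - 1))) =
        DCcast V j (2 * p - j) rfl (by omega) (Db j (2 * p - 1 - j) (B j)) := by
    intro j hj0 hjl
    obtain rfl | hj := hj0.eq_or_lt
    · rw [hzero _ _ (Or.inl (by omega)) (B (0 - 1)), map_zero, DCcast_zero, sub_zero (α 0)]
      exact hB0.symm
    · exact hBj j hj hjl
  exact exists_Db_eq_sub_D_of_DCd_eq D Db hDD hanti hddbar _ α β' B (by omega) (by omega)
    (hdβ' (l - 1) (by omega)) (hdβ' l (by omega)) (hB (l - 1) (by omega) le_rfl)
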